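/- Let α > 0 and let g, f : ℝ → ℝ be measurable probability density functions (nonnegative, integrating to 1 with respect to Lebesgue measure) such that f^{1+α}, g·f^{α}, and g^{1+α} are integrable. Then the density power divergence d_α(g,f) = ∫ [f(x)^{1+α} − (1 + 1/α)·g(x)·f(x)^{α} + (1/α)·g(x)^{1+α}] dx is nonnegative, and d_α(g,f) = 0 if and only if f = g Lebesgue-almost everywhere. -/

import Mathlib

/-!
Up to the factor `1/α`, the integrand is the Bregman divergence `a^p - b^p - p b^(p-1) (a - b)`
of the strictly convex function `t ↦ t^p`, `p = 1 + α`, at `a = g x`, `b = f x`: the gap between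
`a^p` and the tangent line of `t^p` at `b`. It is therefore pointwise nonnegative and vanishes
exactly where `f x = g x`, and a nonnegative integrable function has integral zero iff it vanishes
almost everywhere.
-/

open MeasureTheory

lemma Real.rpow_add_mul_sub_lt_rpow {p a b : ℝ} (hp : 1 < p) (ha : 0 ≤ a) (hb : 0 ≤ b)
    (hab : a ≠ b) : b ^ p + p * b ^ (p - 1) * (a - b) < a ^ p := by
  rcases hb.eq_or_lt with rfl | hb
  · rw [Real.zero_rpow (by linarith), Real.zero_rpow (by linarith)]
    simpa using Real.rpow_pos_of_pos (ha.lt_of_ne hab.symm) p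
  -- Bernoulli's inequality at `s = a / b - 1`, rescaled by `b ^ p`.
  have hs : -1 ≤ a / b - 1 := by linarith [div_nonneg ha hb.le]
  have hs' : a / b - 1 ≠ 0 := by
    rwa [sub_ne_zero, Ne, div_eq_one_iff_eq hb.ne']
  have hbern := one_add_mul_self_lt_rpow_one_add hs hs' hp
  rw [add_sub_cancel, Real.div_rpow ha hb.le, lt_div_iff₀ (Real.rpow_pos_of_pos hb p)] at hbern
  calc b ^ p + p * b ^ (p - 1) * (a - b)
      = (1 + p * (a / b - 1)) * b ^ p := by
        rw [Real.rpow_sub_one hb.ne']; field_simp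
    _ < a ^ p := hbern

/-- `a` stands for the value of the true density `g`, `b` for that of the model density `f`. -/
noncomputable def dpdIntegrand (α a b : ℝ) : ℝ :=
  b ^ (1 + α) - (1 + 1 / α) * a * b ^ α + (1 / α) * a ^ (1 + α)

lemma mul_dpdIntegrand {α : ℝ} (hα : 0 < α) {b : ℝ} (hb : 0 ≤ b) (a : ℝ) :
    α * dpdIntegrand α a b = a ^ (1 + α) - (b ^ (1 + α) + (1 + α) * b ^ α * (a - b)) := by
  rw [dpdIntegrand, Real.rpow_one_add' hb (by linarith)]
  field_simp
  ring

lemma dpdIntegrand_self (α a : ℝ) : dpdIntegrand α a a = 0 := by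
  rcases eq_or_ne a 0 with rfl | ha
  · rcases eq_or_ne α (-1) with rfl | hα
    · norm_num [dpdIntegrand]
    · simp [dpdIntegrand, Real.zero_rpow (show 1 + α ≠ 0 by contrapose! hα; linarith)]
  · rw [dpdIntegrand, add_comm 1 α, Real.rpow_add_one ha]
    ring

lemma dpdIntegrand_pos {α a b : ℝ} (hα : 0 < α) (ha : 0 ≤ a) (hb : 0 ≤ b) (hab : a ≠ b) :
    0 < dpdIntegrand α a b := by
  have htangent := Real.rpow_add_mul_sub_lt_rpow (p := 1 + α) (by linarith) ha hb hab
  rw [add_sub_cancel_left] at htangent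
  have hbregman := mul_dpdIntegrand hα hb a
  exact pos_of_mul_pos_right (by linarith) hα.le

lemma dpdIntegrand_nonneg {α a b : ℝ} (hα : 0 < α) (ha : 0 ≤ a) (hb : 0 ≤ b) :
    0 ≤ dpdIntegrand α a b := by
  rcases eq_or_ne a b with rfl | hab
  · exact (dpdIntegrand_self α a).ge
  · exact (dpdIntegrand_pos hα ha hb hab).le

lemma dpdIntegrand_eq_zero_iff {α a b : ℝ} (hα : 0 < α) (ha : 0 ≤ a) (hb : 0 ≤ b) :
    dpdIntegrand α a b = 0 ↔ a = b := by
  refine ⟨fun h => ?_, fun h => h ▸ dpdIntegrand_self α a⟩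
  by_contra hab
  exact (dpdIntegrand_pos hα ha hb hab).ne' h

lemma integral_dpdIntegrand_nonneg_and_eq_zero_iff {Ω : Type*} [MeasurableSpace Ω] {μ : Measure Ω}
    {α : ℝ} (hα : 0 < α) {g f : Ω → ℝ} (hg0 : ∀ x, 0 ≤ g x) (hf0 : ∀ x, 0 ≤ f x)
    (hint1 : Integrable (fun x => f x ^ (1 + α)) μ)
    (hint2 : Integrable (fun x => g x * f x ^ α) μ)
    (hint3 : Integrable (fun x => g x ^ (1 + α)) μ) :
    0 ≤ ∫ x, dpdIntegrand α (g x) (f x) ∂μ ∧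
      (∫ x, dpdIntegrand α (g x) (f x) ∂μ = 0 ↔ f =ᵐ[μ] g) := by
  have hint : Integrable (fun x => dpdIntegrand α (g x) (f x)) μ := by
    have hint2' := hint2.const_mul (1 + 1 / α)
    simp_rw [← mul_assoc] at hint2'
    exact (hint1.sub hint2').add (hint3.const_mul (1 / α))
  have hnonneg (x : Ω) : 0 ≤ dpdIntegrand α (g x) (f x) := dpdIntegrand_nonneg hα (hg0 x) (hf0 x)
  refine ⟨integral_nonneg hnonneg, ?_⟩
  rw [integral_eq_zero_iff_of_nonneg hnonneg hint, Filter.EventuallyEq, Filter.EventuallyEq]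
  simp only [Pi.zero_apply, dpdIntegrand_eq_zero_iff hα (hg0 _) (hf0 _), eq_comm]

theorem dpd_nonneg_and_eq_zero_iff_general (α : ℝ) (hα : 0 < α) (g f : ℝ → ℝ)
    (hg0 : ∀ x, 0 ≤ g x) (hf0 : ∀ x, 0 ≤ f x)
    (hint1 : Integrable (fun x => f x ^ (1 + α)))
    (hint2 : Integrable (fun x => g x * f x ^ α))
    (hint3 : Integrable (fun x => g x ^ (1 + α))) :
    0 ≤ ∫ x, (f x ^ (1 + α) - (1 + 1 / α) * g x * f x ^ α + (1 / α) * g x ^ (1 + α)) ∧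
    ((∫ x, (f x ^ (1 + α) - (1 + 1 / α) * g x * f x ^ α + (1 / α) * g x ^ (1 + α))) = 0 ↔
      f =ᵐ[volume] g) :=
  integral_dpdIntegrand_nonneg_and_eq_zero_iff hα hg0 hf0 hint1 hint2 hint3

/-- nonnegativity of the density power divergence
d_α(g,f) = ∫ [f^{1+α} − (1+1/α)·g·f^{α} + (1/α)·g^{1+α}] dx for densities g, f,
with equality iff f = g Lebesgue-almost everywhere. -/
theorem dpd_nonneg_and_eq_zero_iff (α : ℝ) (hα : 0 < α) (g f : ℝ → ℝ)
    (hgm : Measurable g) (hfm : Measurable f)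
    (hg0 : ∀ x, 0 ≤ g x) (hf0 : ∀ x, 0 ≤ f x)
    (hg1 : ∫ x, g x = 1) (hf1 : ∫ x, f x = 1)
    (hint1 : Integrable (fun x => f x ^ (1 + α)))
    (hint2 : Integrable (fun x => g x * f x ^ α))
    (hint3 : Integrable (fun x => g x ^ (1 + α))) :
    0 ≤ ∫ x, (f x ^ (1 + α) - (1 + 1 / α) * g x * f x ^ α + (1 / α) * g x ^ (1 + α)) ∧
    ((∫ x, (f x ^ (1 + α) - (1 + 1 / α) * g x * f x ^ α + (1 / α) * g x ^ (1 + α))) = 0 ↔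
      f =ᵐ[volume] g) :=
  dpd_nonneg_and_eq_zero_iff_general α hα g f hg0 hf0 hint1 hint2 hint3
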